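/- Let d ≥ 1 and s, l ∈ ℝ. There exist a constant c > 0 and N₀ ∈ ℕ, depending only on d, s, l, such that for every integer N ≥ N₀ the following holds. Set Q := (−1/2, 1/2)^d, r := (log N)^{−2}, Σ_u := {0} and Σ_n := {Ne₁, −Ne₁}. Then for every T with 0 < T ≤ c·N^{−2}, (∫_{ℝ^d} ⟨ξ⟩^{2s} |S(T,ξ)|² dξ)^{1/2} ≥ c · r² · T · N^{s−l}. -/

import Mathlib

open MeasureTheory Set
open scoped Classical

noncomputable section

/-- The (Fourier-side) Schrödinger component of the second Picard iterate, up to a unimodular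
factor: `S(T,ξ) = r²|Q|⁻¹ Σ_{η_u∈Σ_u,η_n∈Σ_n} ∫_{η_u+Q} 1_{η_n+Q}(ξ−η) ⟨η⟩^{−s}⟨ξ−η⟩^{−l}
  ½∫₀ᵀ (e^{iσ(|ξ|²−|η|²+|ξ−η|)} + e^{iσ(|ξ|²−|η|²−|ξ−η|)}) dσ dη`. -/
def Sfun {d : ℕ} (s l r : ℝ) (Q : Set (EuclideanSpace ℝ (Fin d)))
    (Su Sn : Finset (EuclideanSpace ℝ (Fin d))) (T : ℝ) (ξ : EuclideanSpace ℝ (Fin d)) : ℂ :=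
  ((r ^ 2 * ((volume Q).toReal)⁻¹ : ℝ) : ℂ) *
    ∑ ηu ∈ Su, ∑ ηn ∈ Sn,
      ∫ η in {ζ : EuclideanSpace ℝ (Fin d) | ζ - ηu ∈ Q},
        Set.indicator {ζ : EuclideanSpace ℝ (Fin d) | ζ - ηn ∈ Q} (fun _ => (1 : ℂ)) (ξ - η) *
          (((1 + ‖η‖ ^ 2) ^ (-s / 2) * (1 + ‖ξ - η‖ ^ 2) ^ (-l / 2) : ℝ) : ℂ) *
          ((∫ σ in (0 : ℝ)..T,
              (Complex.exp (Complex.I * ((σ * (‖ξ‖ ^ 2 - ‖η‖ ^ 2 + ‖ξ - η‖) : ℝ) : ℂ)) +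
                Complex.exp (Complex.I * ((σ * (‖ξ‖ ^ 2 - ‖η‖ ^ 2 - ‖ξ - η‖) : ℝ) : ℂ)))) / 2)

/-! For `ξ` in the cube `a + (-1/4, 1/4)^d` around `a = N e₁`, the `-a` term of `S(T, ξ)` vanishes,
and for `T ≤ N⁻² / 7` every phase `σ (|ξ|² - |η|² ± |ξ - η|)` with `σ ∈ [0, T]` is at most `1` in
absolute value, so the time integral has real part at least `T / 2`. There the weights are
comparable to `N^{-l}` and `⟨ξ⟩^{2s}` to `N^{2s}`; integrating the real part over
`η ∈ (-1/8, 1/8)^d` gives `|S(T, ξ)| ≳ r² T N^{-l}` on a set of measure `2^{-d}`. -/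

lemma le_rpow_of_le_mul_of_le_mul {x y k : ℝ} (t : ℝ) (hy : 0 < y) (hk : 1 ≤ k)
    (h₁ : y ≤ k * x) (h₂ : x ≤ k * y) : k ^ (-|t|) * y ^ t ≤ x ^ t := by
  have hk₀ : 0 < k := by linarith
  have hx : 0 < x := pos_of_mul_pos_right (hy.trans_le h₁) hk₀.le
  rcases le_or_gt 0 t with ht | ht
  · rw [abs_of_nonneg ht, Real.rpow_neg hk₀.le, ← Real.inv_rpow hk₀.le,
      ← Real.mul_rpow (by positivity) hy.le]
    exact Real.rpow_le_rpow (by positivity) (by rwa [inv_mul_le_iff₀ hk₀]) ht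
  · rw [abs_of_neg ht, neg_neg, ← Real.mul_rpow hk₀.le hy.le]
    exact Real.rpow_le_rpow_of_nonpos hx h₂ ht.le

def timeKernel (T A B : ℝ) : ℂ :=
  (∫ σ in (0 : ℝ)..T,
    (Complex.exp (Complex.I * ((σ * A : ℝ) : ℂ)) + Complex.exp (Complex.I * ((σ * B : ℝ) : ℂ)))) / 2

lemma Continuous.timeKernel {X : Type*} [TopologicalSpace X] (T : ℝ) {A B : X → ℝ}
    (hA : Continuous A) (hB : Continuous B) : Continuous fun x => timeKernel T (A x) (B x) :=
  (intervalIntegral.continuous_parametric_intervalIntegral_of_continuous' (by fun_prop) _ _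
    |>.div_const _)

lemma norm_timeKernel_le {T : ℝ} (hT : 0 ≤ T) (A B : ℝ) : ‖timeKernel T A B‖ ≤ T := by
  have hint : ‖∫ σ in (0 : ℝ)..T, (Complex.exp (Complex.I * ((σ * A : ℝ) : ℂ)) +
      Complex.exp (Complex.I * ((σ * B : ℝ) : ℂ)))‖ ≤ 2 * |T - 0| := by
    refine intervalIntegral.norm_integral_le_of_norm_le_const fun σ _ => (norm_add_le _ _).trans ?_
    simp only [mul_comm Complex.I, Complex.norm_exp_ofReal_mul_I]
    norm_num
  rw [sub_zero, abs_of_nonneg hT] at hint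
  rw [timeKernel, norm_div, Complex.norm_ofNat]
  linarith

lemma half_le_re_timeKernel {T A B : ℝ} (hT : 0 ≤ T) (hA : T * |A| ≤ 1) (hB : T * |B| ≤ 1) :
    T / 2 ≤ (timeKernel T A B).re := by
  have hcos : ∀ σ ∈ Icc 0 T, ∀ C : ℝ, T * |C| ≤ 1 → 1 / 2 ≤ Real.cos (σ * C) := by
    intro σ hσ C hC
    have hσC : |σ * C| ≤ 1 := by
      rw [abs_mul, abs_of_nonneg hσ.1]
      exact (mul_le_mul_of_nonneg_right hσ.2 (abs_nonneg C)).trans hC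
    have := Real.one_sub_sq_div_two_le_cos (x := σ * C)
    nlinarith [sq_abs (σ * C), abs_nonneg (σ * C)]
  have hre : (timeKernel T A B).re =
      (∫ σ in (0 : ℝ)..T, (Real.cos (σ * A) + Real.cos (σ * B))) / 2 := by
    rw [timeKernel, Complex.div_ofNat_re, ← RCLike.re_to_complex,
      ← intervalIntegral.intervalIntegral_re (Continuous.intervalIntegrable (by fun_prop) _ _)]
    simp only [RCLike.re_to_complex, Complex.add_re, mul_comm Complex.I,
      Complex.exp_ofReal_mul_I_re]
  have hmono : ∫ σ in (0 : ℝ)..T, (1 : ℝ) ≤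
      ∫ σ in (0 : ℝ)..T, (Real.cos (σ * A) + Real.cos (σ * B)) :=
    intervalIntegral.integral_mono_on hT intervalIntegrable_const
      (Continuous.intervalIntegrable (by fun_prop) _ _)
      fun σ hσ => by linarith [hcos σ hσ A hA, hcos σ hσ B hB]
  rw [hre]
  simp only [intervalIntegral.integral_const, sub_zero, smul_eq_mul, mul_one] at hmono
  linarith

/-- Collects the lower bounds on the weights, on the real part of the time kernel and on the
volumes of `cube a (1/4)` and `cube 0 (1/8)`. -/
def lowerBoundConst (d : ℕ) (s l : ℝ) : ℝ :=
  (1 / 2) ^ d * 4 ^ (-|s|) * ((1 / 4) ^ d * (1 + d) ^ (-|s| / 2) * 4 ^ (-|l| / 2) / 2) ^ 2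

lemma lowerBoundConst_pos (d : ℕ) (s l : ℝ) : 0 < lowerBoundConst d s l := by
  unfold lowerBoundConst
  positivity

section

variable {d : ℕ}

local notation "𝔼" => EuclideanSpace ℝ (Fin d)

def cube (c : 𝔼) (ε : ℝ) : Set 𝔼 := {ξ | ∀ i, |ξ i - c i| < ε}

lemma cube_zero (ε : ℝ) : cube (0 : 𝔼) ε = {ξ | ∀ i, |ξ i| < ε} := by
  simp [cube]

lemma setOf_sub_mem_cube_zero (b : 𝔼) (ε : ℝ) : {ζ | ζ - b ∈ cube 0 ε} = cube b ε := by
  simp [cube]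

lemma isOpen_cube (c : 𝔼) (ε : ℝ) : IsOpen (cube c ε) := by
  simp only [cube, ofPred_forall]
  exact isOpen_iInter_of_finite fun i => isOpen_lt (by fun_prop) continuous_const

lemma measurableSet_cube (c : 𝔼) (ε : ℝ) : MeasurableSet (cube c ε) :=
  (isOpen_cube c ε).measurableSet

lemma volume_cube (c : 𝔼) (ε : ℝ) : volume (cube c ε) = ENNReal.ofReal (2 * ε) ^ d := by
  have hpi : cube c ε = WithLp.ofLp ⁻¹' univ.pi fun i => Ioo (c i - ε) (c i + ε) := by
    ext ξ
    simp only [cube, mem_ofPred_eq, mem_preimage, mem_univ_pi, mem_Ioo, abs_sub_lt_iff]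
    exact forall_congr' fun i => by constructor <;> intro h <;> constructor <;> linarith [h.1, h.2]
  rw [hpi, (PiLp.volume_preserving_ofLp (Fin d)).measure_preimage
    (MeasurableSet.univ_pi fun i => measurableSet_Ioo).nullMeasurableSet, volume_pi_pi]
  simp only [Real.volume_Ioo, add_sub_sub_cancel, ← two_mul, Finset.prod_const, Finset.card_univ,
    Fintype.card_fin]

lemma volume_cube_lt_top (c : 𝔼) (ε : ℝ) : volume (cube c ε) < ⊤ := by
  rw [volume_cube]
  exact ENNReal.pow_lt_top ENNReal.ofReal_lt_top

lemma volume_real_cube (c : 𝔼) {ε : ℝ} (hε : 0 ≤ ε) : volume.real (cube c ε) = (2 * ε) ^ d := by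
  rw [measureReal_def, volume_cube, ENNReal.toReal_pow, ENNReal.toReal_ofReal (by positivity)]

lemma cube_subset_cube {c : 𝔼} {ε ε' : ℝ} (h : ε ≤ ε') : cube c ε ⊆ cube c ε' :=
  fun _ hξ i => (hξ i).trans_le h

lemma sub_mem_cube {c ξ η : 𝔼} {ε δ : ℝ} (hξ : ξ ∈ cube c ε) (hη : η ∈ cube 0 δ) :
    ξ - η ∈ cube c (ε + δ) := fun i => by
  have h₁ := abs_lt.1 (hξ i)
  have h₂ := abs_lt.1 (hη i)
  simp only [PiLp.sub_apply, PiLp.zero_apply, sub_zero] at h₁ h₂ ⊢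
  exact abs_lt.2 ⟨by linarith, by linarith⟩

lemma norm_sub_le_of_mem_cube {c ξ : 𝔼} {ε : ℝ} (hε : 0 ≤ ε) (hξ : ξ ∈ cube c ε) :
    ‖ξ - c‖ ≤ √d * ε := by
  have hsum : ∑ i, ‖(ξ - c) i‖ ^ 2 ≤ d * ε ^ 2 := by
    calc ∑ i, ‖(ξ - c) i‖ ^ 2 ≤ ∑ _i : Fin d, ε ^ 2 :=
          Finset.sum_le_sum fun i _ => pow_le_pow_left₀ (norm_nonneg _) (hξ i).le 2
      _ = d * ε ^ 2 := by simp
  rw [EuclideanSpace.norm_eq, ← Real.sqrt_sq hε, ← Real.sqrt_mul (Nat.cast_nonneg d)]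
  exact Real.sqrt_le_sqrt hsum

lemma abs_norm_sub_norm_le_of_mem_cube {c ξ : 𝔼} {ε : ℝ} (hε : 0 ≤ ε) (hξ : ξ ∈ cube c ε) :
    |‖ξ‖ - ‖c‖| ≤ √d * ε :=
  (abs_norm_sub_norm_le ξ c).trans (norm_sub_le_of_mem_cube hε hξ)

lemma norm_le_of_mem_cube_zero {ξ : 𝔼} {ε : ℝ} (hε : 0 ≤ ε) (hξ : ξ ∈ cube 0 ε) :
    ‖ξ‖ ≤ √d * ε := by
  simpa using norm_sub_le_of_mem_cube hε hξ

/-- `⟨η⟩^{-s} ⟨ξ - η⟩^{-l}`. -/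
def japaneseWeight (s l : ℝ) (ξ η : 𝔼) : ℝ :=
  (1 + ‖η‖ ^ 2) ^ (-s / 2) * (1 + ‖ξ - η‖ ^ 2) ^ (-l / 2)

def amplitude (s l T : ℝ) (b ξ η : 𝔼) : ℂ :=
  (cube b (1 / 2)).indicator (fun _ => (1 : ℂ)) (ξ - η) * (japaneseWeight s l ξ η : ℂ) *
    timeKernel T (‖ξ‖ ^ 2 - ‖η‖ ^ 2 + ‖ξ - η‖) (‖ξ‖ ^ 2 - ‖η‖ ^ 2 - ‖ξ - η‖)

lemma japaneseWeight_nonneg (s l : ℝ) (ξ η : 𝔼) : 0 ≤ japaneseWeight s l ξ η := by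
  unfold japaneseWeight
  positivity

lemma continuous_japaneseWeight (s l : ℝ) :
    Continuous fun p : 𝔼 × 𝔼 => japaneseWeight s l p.1 p.2 :=
  ((by fun_prop : Continuous fun p : 𝔼 × 𝔼 => 1 + ‖p.2‖ ^ 2).rpow_const
    fun _ => Or.inl (by positivity)).mul
    ((by fun_prop : Continuous fun p : 𝔼 × 𝔼 => 1 + ‖p.1 - p.2‖ ^ 2).rpow_const
      fun _ => Or.inl (by positivity))

lemma measurable_amplitude (s l T : ℝ) (b : 𝔼) :
    Measurable fun p : 𝔼 × 𝔼 => amplitude s l T b p.1 p.2 := by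
  have hcube : Measurable fun p : 𝔼 × 𝔼 =>
      (cube b (1 / 2)).indicator (fun _ => (1 : ℂ)) (p.1 - p.2) :=
    (measurable_const.indicator (measurableSet_cube b _)).comp (measurable_fst.sub measurable_snd)
  have hkernel : Continuous fun p : 𝔼 × 𝔼 =>
      timeKernel T (‖p.1‖ ^ 2 - ‖p.2‖ ^ 2 + ‖p.1 - p.2‖) (‖p.1‖ ^ 2 - ‖p.2‖ ^ 2 - ‖p.1 - p.2‖) :=
    Continuous.timeKernel T (by fun_prop) (by fun_prop)
  exact (hcube.mul (Complex.continuous_ofReal.comp (continuous_japaneseWeight s l)).measurable).mul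
    hkernel.measurable

lemma norm_amplitude_le {T : ℝ} (hT : 0 ≤ T) (s l : ℝ) (b ξ η : 𝔼) :
    ‖amplitude s l T b ξ η‖ ≤ japaneseWeight s l ξ η * T := by
  have hind : ‖(cube b (1 / 2)).indicator (fun _ => (1 : ℂ)) (ξ - η)‖ ≤ 1 :=
    (norm_indicator_le_norm_self (fun _ => (1 : ℂ)) _).trans_eq norm_one
  have hw := japaneseWeight_nonneg s l ξ η
  have hK := norm_timeKernel_le hT (‖ξ‖ ^ 2 - ‖η‖ ^ 2 + ‖ξ - η‖) (‖ξ‖ ^ 2 - ‖η‖ ^ 2 - ‖ξ - η‖)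
  rw [amplitude, norm_mul, norm_mul, Complex.norm_real, Real.norm_of_nonneg hw]
  calc _ ≤ 1 * japaneseWeight s l ξ η * T := by gcongr
    _ = _ := by ring

lemma re_amplitude_of_mem {s l T : ℝ} {b ξ η : 𝔼} (h : ξ - η ∈ cube b (1 / 2)) :
    (amplitude s l T b ξ η).re = japaneseWeight s l ξ η *
      (timeKernel T (‖ξ‖ ^ 2 - ‖η‖ ^ 2 + ‖ξ - η‖) (‖ξ‖ ^ 2 - ‖η‖ ^ 2 - ‖ξ - η‖)).re := by
  rw [amplitude, indicator_of_mem h, one_mul, Complex.re_ofReal_mul]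

lemma amplitude_of_notMem {s l T : ℝ} {b ξ η : 𝔼} (h : ξ - η ∉ cube b (1 / 2)) :
    amplitude s l T b ξ η = 0 := by
  rw [amplitude, indicator_of_notMem h, zero_mul, zero_mul]

lemma amplitude_eq_zero_of_norm_lt {s l T : ℝ} {b ξ η : 𝔼} (hξ : ‖b‖ + √d < ‖ξ‖)
    (hη : η ∈ cube 0 (1 / 2)) : amplitude s l T b ξ η = 0 := by
  refine amplitude_of_notMem fun hmem => ?_
  have h₁ := norm_sub_le_of_mem_cube (by norm_num) hmem
  have h₂ := norm_le_of_mem_cube_zero (by norm_num) hη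
  have h₃ : ‖ξ‖ ≤ ‖ξ - η - b‖ + ‖η‖ + ‖b‖ :=
    (norm_add₃_le (a := ξ - η - b)).trans_eq' (by congr 1; abel)
  linarith

lemma integrableOn_amplitude (s l : ℝ) {T : ℝ} (hT : 0 ≤ T) (b ξ : 𝔼) :
    IntegrableOn (amplitude s l T b ξ) (cube 0 (1 / 2)) := by
  obtain ⟨M, hM⟩ := (isCompact_closedBall (0 : 𝔼) √d).exists_bound_of_continuousOn
    ((continuous_japaneseWeight s l).comp (Continuous.prodMk_right ξ)).continuousOn
  refine Measure.integrableOn_of_bounded (M := M * T) (volume_cube_lt_top _ _).ne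
    ((measurable_amplitude s l T b).comp measurable_prodMk_left).aestronglyMeasurable
    (ae_restrict_of_forall_mem (measurableSet_cube _ _) fun η hη => ?_)
  have hη : ‖η‖ ≤ √d :=
    (norm_le_of_mem_cube_zero (by norm_num) hη).trans (by linarith [Real.sqrt_nonneg d])
  exact (norm_amplitude_le hT s l b ξ η).trans (mul_le_mul_of_nonneg_right
    ((le_abs_self _).trans (hM η (mem_closedBall_zero_iff.2 hη))) hT)

lemma Sfun_cube_eq (s l r T : ℝ) {a : 𝔼} (ha : a ≠ -a) (ξ : 𝔼) :
    Sfun s l r (cube 0 (1 / 2)) {0} {a, -a} T ξ =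
      (r ^ 2 : ℝ) * ((∫ η in cube 0 (1 / 2), amplitude s l T a ξ η) +
        ∫ η in cube 0 (1 / 2), amplitude s l T (-a) ξ η) := by
  simp only [Sfun, Finset.sum_singleton, Finset.sum_pair ha, setOf_sub_mem_cube_zero, volume_cube]
  norm_num [amplitude, japaneseWeight, timeKernel]

lemma stronglyMeasurable_Sfun_cube (s l r T : ℝ) {a : 𝔼} (ha : a ≠ -a) :
    StronglyMeasurable (Sfun s l r (cube 0 (1 / 2)) {0} {a, -a} T) := by
  have hint : ∀ b : 𝔼,
      StronglyMeasurable fun ξ => ∫ η in cube 0 (1 / 2), amplitude s l T b ξ η :=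
    fun b => (measurable_amplitude s l T b).stronglyMeasurable.integral_prod_right'
  rw [funext (Sfun_cube_eq s l r T ha)]
  exact ((hint a).add (hint (-a))).const_mul _

lemma Sfun_cube_eq_zero_of_norm_lt (s l r T : ℝ) {a ξ : 𝔼} (ha : a ≠ -a)
    (hξ : ‖a‖ + √d < ‖ξ‖) : Sfun s l r (cube 0 (1 / 2)) {0} {a, -a} T ξ = 0 := by
  have hvanish : ∀ b : 𝔼, ‖b‖ = ‖a‖ → ∫ η in cube 0 (1 / 2), amplitude s l T b ξ η = 0 :=
    fun b hb => setIntegral_eq_zero_of_forall_eq_zero fun η hη =>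
      amplitude_eq_zero_of_norm_lt (hb ▸ hξ) hη
  rw [Sfun_cube_eq s l r T ha, hvanish a rfl, hvanish (-a) (norm_neg a), add_zero, mul_zero]

lemma norm_Sfun_cube_le (s l r : ℝ) {T M : ℝ} (hT : 0 ≤ T) {a ξ : 𝔼} (ha : a ≠ -a)
    (hM : ∀ η ∈ cube (0 : 𝔼) (1 / 2), japaneseWeight s l ξ η ≤ M) :
    ‖Sfun s l r (cube 0 (1 / 2)) {0} {a, -a} T ξ‖ ≤ r ^ 2 * (2 * (M * T)) := by
  have hint : ∀ b : 𝔼, ‖∫ η in cube 0 (1 / 2), amplitude s l T b ξ η‖ ≤ M * T := fun b => by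
    have h := norm_setIntegral_le_of_norm_le_const (volume_cube_lt_top (0 : 𝔼) (1 / 2))
      fun η hη => (norm_amplitude_le hT s l b ξ η).trans (mul_le_mul_of_nonneg_right (hM η hη) hT)
    rwa [volume_real_cube _ (by norm_num), show (2 : ℝ) * (1 / 2) = 1 by norm_num, one_pow,
      mul_one] at h
  rw [Sfun_cube_eq s l r T ha, norm_mul, Complex.norm_real, Real.norm_of_nonneg (sq_nonneg r)]
  gcongr
  exact (norm_add_le _ _).trans (by linarith [hint a, hint (-a)])

/-- Needed because the Bochner integral of a non-integrable function is `0`. -/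
lemma integrable_weighted_normSq_Sfun_cube (s l r : ℝ) {T : ℝ} (hT : 0 ≤ T) {a : 𝔼}
    (ha : a ≠ -a) :
    Integrable fun ξ => (1 + ‖ξ‖ ^ 2) ^ s * ‖Sfun s l r (cube 0 (1 / 2)) {0} {a, -a} T ξ‖ ^ 2 := by
  set R := ‖a‖ + √d
  have hball : IsCompact (Metric.closedBall (0 : 𝔼) R) := isCompact_closedBall 0 R
  obtain ⟨M, hM⟩ := (hball.prod hball).exists_bound_of_continuousOn
    (continuous_japaneseWeight s l).continuousOn
  obtain ⟨M', hM'⟩ := hball.exists_bound_of_continuousOn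
    ((by fun_prop : Continuous fun ξ : 𝔼 => 1 + ‖ξ‖ ^ 2).rpow_const
      (p := s) fun _ => Or.inl (by positivity)).continuousOn
  have hmeas : Measurable fun ξ =>
      (1 + ‖ξ‖ ^ 2) ^ s * ‖Sfun s l r (cube 0 (1 / 2)) {0} {a, -a} T ξ‖ ^ 2 :=
    (by fun_prop : Measurable fun ξ : 𝔼 => (1 + ‖ξ‖ ^ 2) ^ s).mul
      ((stronglyMeasurable_Sfun_cube s l r T ha).measurable.norm.pow_const 2)
  refine IntegrableOn.integrable_of_forall_notMem_eq_zero (s := Metric.closedBall 0 R)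
    (Measure.integrableOn_of_bounded (M := M' * (r ^ 2 * (2 * (M * T))) ^ 2)
      measure_closedBall_lt_top.ne hmeas.aestronglyMeasurable
      (ae_restrict_of_forall_mem measurableSet_closedBall fun ξ hξ => ?_)) fun ξ hξ => ?_
  · have hS := norm_Sfun_cube_le s l r (M := M) hT ha fun η hη =>
      (le_abs_self _).trans (hM (ξ, η) ⟨hξ, mem_closedBall_zero_iff.2 <|
        (norm_le_of_mem_cube_zero (by norm_num) hη).trans (by
          have := Real.sqrt_nonneg d; have := norm_nonneg a; simp only [R]; linarith)⟩)
    rw [norm_mul, norm_pow, norm_norm]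
    exact mul_le_mul (hM' ξ hξ) (pow_le_pow_left₀ (norm_nonneg _) hS 2) (by positivity)
      ((norm_nonneg _).trans (hM' ξ hξ))
  · rw [Sfun_cube_eq_zero_of_norm_lt s l r T ha (by simpa using hξ)]
    simp

lemma ne_neg_of_norm_pos {a : 𝔼} (ha : 0 < ‖a‖) : a ≠ -a := fun h => by
  have h₀ : ‖a - -a‖ = 0 := by rw [← h, sub_self, norm_zero]
  rw [sub_neg_eq_add, ← two_smul ℝ, norm_smul, Real.norm_two] at h₀
  linarith

section

variable {a ξ η : EuclideanSpace ℝ (Fin d)} (ha : 8 * √d ≤ ‖a‖) (ha₁ : 1 ≤ ‖a‖)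
include ha ha₁

lemma amplitude_neg_eq_zero (s l T : ℝ) (hξ : ξ ∈ cube a (1 / 4)) (hη : η ∈ cube 0 (1 / 2)) :
    amplitude s l T (-a) ξ η = 0 := by
  refine amplitude_of_notMem fun hmem => ?_
  have h₁ := norm_sub_le_of_mem_cube (by norm_num) hmem
  have h₂ := norm_sub_le_of_mem_cube (by norm_num) hξ
  have h₃ := norm_le_of_mem_cube_zero (by norm_num) hη
  have h₄ : ‖(2 : ℝ) • a‖ ≤ ‖ξ - η - -a‖ + ‖ξ - a‖ + ‖η‖ := by
    rw [show (2 : ℝ) • a = ξ - η - -a - (ξ - a) + η by rw [two_smul]; abel]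
    exact (norm_add_le _ _).trans (by gcongr; exact norm_sub_le _ _)
  rw [norm_smul, Real.norm_two] at h₄
  linarith [Real.sqrt_nonneg d]

lemma half_le_re_timeKernel_of_mem_cube {T : ℝ} (hT : 0 ≤ T) (hTa : T * (7 * ‖a‖ ^ 2) ≤ 1)
    (hξ : ξ ∈ cube a (1 / 4)) (hη : η ∈ cube 0 (1 / 2)) (hξη : ξ - η ∈ cube a (1 / 2)) :
    T / 2 ≤ (timeKernel T (‖ξ‖ ^ 2 - ‖η‖ ^ 2 + ‖ξ - η‖) (‖ξ‖ ^ 2 - ‖η‖ ^ 2 - ‖ξ - η‖)).re := by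
  have h₁ := abs_le.1 (abs_norm_sub_norm_le_of_mem_cube (by norm_num) hξ)
  have h₂ := norm_le_of_mem_cube_zero (by norm_num) hη
  have h₃ := abs_le.1 (abs_norm_sub_norm_le_of_mem_cube (by norm_num) hξη)
  have hd := Real.sqrt_nonneg d
  have hphase : ‖ξ‖ ^ 2 + ‖η‖ ^ 2 + ‖ξ - η‖ ≤ 7 * ‖a‖ ^ 2 := by
    nlinarith [norm_nonneg ξ, norm_nonneg η]
  have hsmall : ∀ A : ℝ, |A| ≤ ‖ξ‖ ^ 2 + ‖η‖ ^ 2 + ‖ξ - η‖ → T * |A| ≤ 1 := fun A hA =>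
    (mul_le_mul_of_nonneg_left (hA.trans hphase) hT).trans hTa
  refine half_le_re_timeKernel hT (hsmall _ ?_) (hsmall _ ?_) <;>
    exact abs_le.2 ⟨by nlinarith [norm_nonneg (ξ - η), sq_nonneg ‖ξ‖],
      by nlinarith [norm_nonneg (ξ - η), sq_nonneg ‖η‖]⟩

lemma le_japaneseWeight_of_mem_cube (s l : ℝ) (hη : η ∈ cube 0 (1 / 2))
    (hξη : ξ - η ∈ cube a (1 / 2)) :
    (1 + d) ^ (-|s| / 2) * 4 ^ (-|l| / 2) * ‖a‖ ^ (-l) ≤ japaneseWeight s l ξ η := by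
  have h₂ := norm_le_of_mem_cube_zero (by norm_num) hη
  have h₃ := abs_le.1 (abs_norm_sub_norm_le_of_mem_cube (by norm_num) hξη)
  have hd := Real.sq_sqrt (Nat.cast_nonneg d)
  have hd₀ := Real.sqrt_nonneg d
  have habs : ∀ t : ℝ, -|-t / 2| = -|t| / 2 := fun t => by
    rw [neg_div, abs_neg, abs_div, abs_two, neg_div]
  have hfirst := le_rpow_of_le_mul_of_le_mul (-s / 2) one_pos (k := 1 + d) (x := 1 + ‖η‖ ^ 2)
    (le_add_of_nonneg_right (Nat.cast_nonneg d)) (by nlinarith [norm_nonneg η])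
    (by nlinarith [norm_nonneg η])
  have hsecond := le_rpow_of_le_mul_of_le_mul (-l / 2) (by positivity) (k := 4)
    (x := 1 + ‖ξ - η‖ ^ 2) (y := ‖a‖ ^ 2) (by norm_num)
    (by nlinarith [norm_nonneg (ξ - η)]) (by nlinarith [norm_nonneg (ξ - η)])
  rw [habs, Real.one_rpow, mul_one] at hfirst
  rw [habs, ← Real.rpow_natCast_mul (norm_nonneg a), Nat.cast_ofNat,
    show (2 : ℝ) * (-l / 2) = -l by ring] at hsecond
  rw [japaneseWeight, mul_assoc]
  exact mul_le_mul hfirst hsecond (by positivity) (by positivity)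

lemma re_amplitude_nonneg (s l : ℝ) {T : ℝ} (hT : 0 ≤ T) (hTa : T * (7 * ‖a‖ ^ 2) ≤ 1)
    (hξ : ξ ∈ cube a (1 / 4)) (hη : η ∈ cube 0 (1 / 2)) : 0 ≤ (amplitude s l T a ξ η).re := by
  by_cases hξη : ξ - η ∈ cube a (1 / 2)
  · rw [re_amplitude_of_mem hξη]
    exact mul_nonneg (japaneseWeight_nonneg s l ξ η)
      ((by linarith : (0 : ℝ) ≤ T / 2).trans
        (half_le_re_timeKernel_of_mem_cube ha ha₁ hT hTa hξ hη hξη))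
  · rw [amplitude_of_notMem hξη, Complex.zero_re]

lemma le_re_amplitude (s l : ℝ) {T : ℝ} (hT : 0 ≤ T) (hTa : T * (7 * ‖a‖ ^ 2) ≤ 1)
    (hξ : ξ ∈ cube a (1 / 4)) (hη : η ∈ cube 0 (1 / 8)) :
    (1 + d) ^ (-|s| / 2) * 4 ^ (-|l| / 2) * ‖a‖ ^ (-l) * (T / 2) ≤
      (amplitude s l T a ξ η).re := by
  have hη' : η ∈ cube 0 (1 / 2) := cube_subset_cube (by norm_num) hη
  have hξη : ξ - η ∈ cube a (1 / 2) := cube_subset_cube (by norm_num) (sub_mem_cube hξ hη)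
  rw [re_amplitude_of_mem hξη]
  exact mul_le_mul (le_japaneseWeight_of_mem_cube ha ha₁ s l hη' hξη)
    (half_le_re_timeKernel_of_mem_cube ha ha₁ hT hTa hξ hη' hξη) (by linarith)
    (japaneseWeight_nonneg s l ξ η)

lemma le_re_setIntegral_amplitude (s l : ℝ) {T : ℝ} (hT : 0 ≤ T) (hTa : T * (7 * ‖a‖ ^ 2) ≤ 1)
    (hξ : ξ ∈ cube a (1 / 4)) :
    (1 / 4) ^ d * ((1 + d) ^ (-|s| / 2) * 4 ^ (-|l| / 2) * ‖a‖ ^ (-l) * (T / 2)) ≤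
      (∫ η in cube 0 (1 / 2), amplitude s l T a ξ η).re := by
  set w := (1 + d) ^ (-|s| / 2) * 4 ^ (-|l| / 2) * ‖a‖ ^ (-l) * (T / 2)
  have hpointwise : ∀ η ∈ cube (0 : 𝔼) (1 / 2),
      (cube 0 (1 / 8)).indicator (fun _ => w) η ≤ (amplitude s l T a ξ η).re := fun η hη => by
    by_cases hη' : η ∈ cube (0 : 𝔼) (1 / 8)
    · rw [indicator_of_mem hη']
      exact le_re_amplitude ha ha₁ s l hT hTa hξ hη'
    · rw [indicator_of_notMem hη']
      exact re_amplitude_nonneg ha ha₁ s l hT hTa hξ hη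
  have hint := integrableOn_amplitude s l hT a ξ
  calc (1 / 4) ^ d * w =
        ∫ η in cube 0 (1 / 2), (cube (0 : 𝔼) (1 / 8)).indicator (fun _ => w) η := by
        rw [integral_indicator (measurableSet_cube _ _), Measure.restrict_restrict
          (measurableSet_cube _ _), inter_eq_left.2 (cube_subset_cube (by norm_num)),
          setIntegral_const, smul_eq_mul, volume_real_cube _ (by norm_num)]
        norm_num
    _ ≤ ∫ η in cube 0 (1 / 2), (amplitude s l T a ξ η).re :=
        setIntegral_mono_on ((integrableOn_const (volume_cube_lt_top _ _).ne).indicator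
          (measurableSet_cube _ _)) hint.re (measurableSet_cube _ _) hpointwise
    _ = _ := integral_re hint

lemma le_norm_Sfun_cube (s l r : ℝ) {T : ℝ} (hT : 0 ≤ T) (hTa : T * (7 * ‖a‖ ^ 2) ≤ 1)
    (hξ : ξ ∈ cube a (1 / 4)) :
    r ^ 2 * ((1 / 4) ^ d * ((1 + d) ^ (-|s| / 2) * 4 ^ (-|l| / 2) * ‖a‖ ^ (-l) * (T / 2))) ≤
      ‖Sfun s l r (cube 0 (1 / 2)) {0} {a, -a} T ξ‖ := by
  rw [Sfun_cube_eq s l r T (ne_neg_of_norm_pos (by linarith)),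
    setIntegral_eq_zero_of_forall_eq_zero fun η hη => amplitude_neg_eq_zero ha ha₁ s l T hξ hη,
    add_zero]
  refine le_trans ?_ (Complex.re_le_norm _)
  rw [Complex.re_ofReal_mul]
  exact mul_le_mul_of_nonneg_left (le_re_setIntegral_amplitude ha ha₁ s l hT hTa hξ) (sq_nonneg r)

lemma le_rpow_one_add_sq_norm_of_mem_cube (s : ℝ) (hξ : ξ ∈ cube a (1 / 4)) :
    4 ^ (-|s|) * ‖a‖ ^ (2 * s) ≤ (1 + ‖ξ‖ ^ 2) ^ s := by
  have h₁ := abs_le.1 (abs_norm_sub_norm_le_of_mem_cube (by norm_num) hξ)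
  have hd := Real.sqrt_nonneg d
  have hpow : ‖a‖ ^ (2 * s) = (‖a‖ ^ 2) ^ s := by
    rw [← Real.rpow_natCast_mul (norm_nonneg a), Nat.cast_ofNat]
  rw [hpow]
  exact le_rpow_of_le_mul_of_le_mul s (by positivity) (by norm_num)
    (by nlinarith [norm_nonneg ξ]) (by nlinarith [norm_nonneg ξ])

lemma le_integral_weighted_normSq_Sfun_cube (s l r : ℝ) {T : ℝ} (hT : 0 ≤ T)
    (hTa : T * (7 * ‖a‖ ^ 2) ≤ 1) :
    lowerBoundConst d s l * (r ^ 2 * T * ‖a‖ ^ (s - l)) ^ 2 ≤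
      ∫ ξ, (1 + ‖ξ‖ ^ 2) ^ s * ‖Sfun s l r (cube 0 (1 / 2)) {0} {a, -a} T ξ‖ ^ 2 := by
  set m := r ^ 2 * ((1 / 4) ^ d * ((1 + d) ^ (-|s| / 2) * 4 ^ (-|l| / 2) * ‖a‖ ^ (-l) * (T / 2)))
  have hpow : ‖a‖ ^ (2 * s) * (‖a‖ ^ (-l)) ^ 2 = (‖a‖ ^ (s - l)) ^ 2 := by
    rw [← Real.rpow_mul_natCast (norm_nonneg a), ← Real.rpow_mul_natCast (norm_nonneg a),
      ← Real.rpow_add (by linarith)]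
    ring_nf
  have hint := integrable_weighted_normSq_Sfun_cube s l r hT
    (ne_neg_of_norm_pos (a := a) (by linarith))
  calc lowerBoundConst d s l * (r ^ 2 * T * ‖a‖ ^ (s - l)) ^ 2
      = 4 ^ (-|s|) * ‖a‖ ^ (2 * s) * m ^ 2 * volume.real (cube a (1 / 4)) := by
        rw [volume_real_cube _ (by norm_num), lowerBoundConst, mul_pow (r ^ 2 * T), ← hpow]
        ring
    _ ≤ ∫ ξ in cube a (1 / 4),
          (1 + ‖ξ‖ ^ 2) ^ s * ‖Sfun s l r (cube 0 (1 / 2)) {0} {a, -a} T ξ‖ ^ 2 :=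
        setIntegral_ge_of_const_le_real (measurableSet_cube _ _) (volume_cube_lt_top _ _).ne
          (fun ξ hξ => mul_le_mul (le_rpow_one_add_sq_norm_of_mem_cube ha ha₁ s hξ)
            (pow_le_pow_left₀ (by positivity) (le_norm_Sfun_cube ha ha₁ s l r hT hTa hξ) 2)
            (by positivity) (by positivity))
          hint.integrableOn
    _ ≤ _ := setIntegral_le_integral hint (ae_of_all _ fun ξ => by positivity)

end

end

theorem statement_17 (d : ℕ) (hd : 0 < d) (s l : ℝ) :
    ∃ c : ℝ, 0 < c ∧ ∃ N₀ : ℕ, ∀ N : ℕ, N₀ ≤ N →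
      ∀ T : ℝ, 0 < T → T ≤ c * (N : ℝ) ^ (-(2 : ℝ)) →
        c * (((Real.log N) ^ 2)⁻¹) ^ 2 * T * (N : ℝ) ^ (s - l) ≤
          (∫ ξ, (1 + ‖ξ‖ ^ 2) ^ s *
              ‖Sfun s l (((Real.log N) ^ 2)⁻¹)
                {ξ : EuclideanSpace ℝ (Fin d) | ∀ i, |ξ i| < 1 / 2}
                {0}
                {(N : ℝ) • EuclideanSpace.single (⟨0, hd⟩ : Fin d) (1 : ℝ),
                  -((N : ℝ) • EuclideanSpace.single (⟨0, hd⟩ : Fin d) (1 : ℝ))} T ξ‖ ^ 2) ^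
            (1 / 2 : ℝ) := by
  set K := lowerBoundConst d s l
  refine ⟨min (1 / 7) √K, lt_min (by norm_num) (Real.sqrt_pos.2 (lowerBoundConst_pos d s l)),
    8 * d, fun N hN T hT hTN => ?_⟩
  set c := min (1 / 7) √K
  set a : EuclideanSpace ℝ (Fin d) := (N : ℝ) • EuclideanSpace.single ⟨0, hd⟩ 1
  have ha : ‖a‖ = N := by rw [norm_smul, PiLp.norm_single, norm_one, mul_one, Real.norm_natCast]
  have hd₁ : (1 : ℝ) ≤ d := by exact_mod_cast hd
  have hN : (8 * d : ℝ) ≤ N := by exact_mod_cast hN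
  have hsqrt : √(d : ℝ) ≤ d := Real.sqrt_le_self_iff.2 (Or.inr hd₁)
  have hTa : T * (7 * ‖a‖ ^ 2) ≤ 1 := by
    rw [Real.rpow_neg (Nat.cast_nonneg N), Real.rpow_two] at hTN
    have hN₀ : (0 : ℝ) < N := by linarith
    rw [ha, ← le_div_iff₀ (by positivity)]
    calc T ≤ c * ((N : ℝ) ^ 2)⁻¹ := hTN
      _ ≤ 1 / 7 * ((N : ℝ) ^ 2)⁻¹ := by gcongr; exact min_le_left _ _
      _ = 1 / (7 * (N : ℝ) ^ 2) := by ring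
  have hbound := le_integral_weighted_normSq_Sfun_cube (a := a) (by rw [ha]; linarith)
    (by rw [ha]; linarith) s l ((Real.log N ^ 2)⁻¹) hT.le hTa
  rw [ha, cube_zero] at hbound
  have hc : c ^ 2 ≤ K :=
    (Real.le_sqrt (by positivity) (lowerBoundConst_pos d s l).le).1 (min_le_right _ _)
  rw [← Real.sqrt_eq_rpow, Real.le_sqrt (by positivity) (integral_nonneg fun ξ => by positivity)]
  calc (c * ((Real.log N ^ 2)⁻¹) ^ 2 * T * (N : ℝ) ^ (s - l)) ^ 2
      = c ^ 2 * (((Real.log N ^ 2)⁻¹) ^ 2 * T * (N : ℝ) ^ (s - l)) ^ 2 := by ring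
    _ ≤ K * (((Real.log N ^ 2)⁻¹) ^ 2 * T * (N : ℝ) ^ (s - l)) ^ 2 := by gcongr
    _ ≤ _ := hbound

end
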